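/- For every α > 1 and every β with 1 ≤ β < 1 + 2/(α−1), and for every ε > 0, there exists a planar graph G with non-negative edge weights and a root vertex r such that every spanning tree T of G satisfying d_T(r,v) ≤ α·d_G(r,v) for all vertices v has weight strictly greater than β times the minimum spanning tree weight of G. -/

import Mathlib

open SimpleGraph Finset

noncomputable def walkWeight {V : Type*} {G : SimpleGraph V} (w : Sym2 V → ℝ)
    {u v : V} (p : G.Walk u v) : ℝ :=
  (p.edges.map w).sum

noncomputable def wdist {V : Type*} (G : SimpleGraph V) (w : Sym2 V → ℝ) (u v : V) : ℝ :=
  sInf {x | ∃ p : G.Walk u v, walkWeight w p = x}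

open scoped Classical in
noncomputable def gweight {V : Type*} [Fintype V] (G : SimpleGraph V) (w : Sym2 V → ℝ) : ℝ :=
  ∑ e ∈ G.edgeSet.toFinset, w e
/-- `H` is a minor of `G`: there are disjoint connected branch sets in `G`,
one for each vertex of `H`, with adjacent branch sets for adjacent vertices. -/
def GraphIsMinor {W V : Type*} (H : SimpleGraph W) (G : SimpleGraph V) : Prop :=
  ∃ f : W → Set V, (∀ x, (G.induce (f x)).Connected) ∧
    (Pairwise fun x y => Disjoint (f x) (f y)) ∧
    ∀ x y, H.Adj x y → ∃ a ∈ f x, ∃ b ∈ f y, G.Adj a b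

/-- Planarity, via Wagner's characterization: no `K₅` minor and no `K₃,₃` minor. -/
def GraphIsPlanar {V : Type*} (G : SimpleGraph V) : Prop :=
  ¬ GraphIsMinor (⊤ : SimpleGraph (Fin 5)) G ∧
    ¬ GraphIsMinor (completeBipartiteGraph (Fin 3) (Fin 3)) G

/-!
Take a root `r` joined to a center `c` by an edge of weight `α + 1`, `k` spokes hanging from `c`,
each a path of `m + 1` edges of weight `δ` and total weight `S = (m + 1) δ` slightly above
`α - 1`, and a direct edge of weight `2` from `r` to the end (leaf) of every spoke. Deleting `r`
leaves a tree, so the graph is planar, and the edge `rc` with the spokes is a spanning tree of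
weight `α + 1 + k S`, which bounds the minimum spanning tree.

A spanning tree `T` with `d_T(r, v) ≤ α d_G(r, v)` must contain every direct edge: without the
one to a leaf, a potential argument shows that the leaf is at distance at least `α + 1 + S > 2α`
from `r` in `T`, but it is at distance `2` in `G`. All other edges weigh at least `δ`, and `T` has
`k (m + 1) + 1` edges, so `w(T) ≥ 2k + (k m + 1) δ`. Per spoke, `T` pays about `α + 1` and the
minimum spanning tree about `α - 1`; for `k` large and `δ` small this beats any
`β < (α + 1) / (α - 1) = 1 + 2 / (α - 1)`.
-/
namespace SimpleGraph

section WalkWeight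

variable {V W : Type*} {G : SimpleGraph V} {w : Sym2 V → ℝ}

@[simp]
lemma walkWeight_nil (u : V) : walkWeight w (Walk.nil : G.Walk u u) = 0 := by
  simp [walkWeight]

@[simp]
lemma walkWeight_cons {u x v : V} (h : G.Adj u x) (p : G.Walk x v) :
    walkWeight w (Walk.cons h p) = w s(u, x) + walkWeight w p := by
  simp [walkWeight]

lemma walkWeight_nonneg (hw : ∀ e, 0 ≤ w e) {u v : V} (p : G.Walk u v) :
    0 ≤ walkWeight w p :=
  List.sum_nonneg fun _ hx => by
    obtain ⟨e, -, rfl⟩ := List.mem_map.1 hx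
    exact hw e

lemma sub_le_walkWeight_of_potential {φ : V → ℝ}
    (hφ : ∀ x y, G.Adj x y → φ y - φ x ≤ w s(x, y)) {u v : V} (p : G.Walk u v) :
    φ v - φ u ≤ walkWeight w p := by
  induction p with
  | nil => simp
  | cons hab q ih => rw [walkWeight_cons]; linarith [hφ _ _ hab]

lemma wdist_le_walkWeight (hw : ∀ e, 0 ≤ w e) {u v : V} (p : G.Walk u v) :
    wdist G w u v ≤ walkWeight w p :=
  csInf_le ⟨0, by rintro x ⟨q, rfl⟩; exact walkWeight_nonneg hw q⟩ ⟨p, rfl⟩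

lemma sub_le_wdist_of_potential {φ : V → ℝ}
    (hφ : ∀ x y, G.Adj x y → φ y - φ x ≤ w s(x, y)) {u v : V} (huv : G.Reachable u v) :
    φ v - φ u ≤ wdist G w u v := by
  obtain ⟨p⟩ := huv
  exact le_csInf ⟨_, p, rfl⟩ (by rintro x ⟨q, rfl⟩; exact sub_le_walkWeight_of_potential hφ q)

lemma walkWeight_map {H : SimpleGraph W} (f : G →g H) (w : Sym2 W → ℝ) {u v : V}
    (p : G.Walk u v) : walkWeight w (p.map f) = walkWeight (w ∘ Sym2.map f) p := by
  simp [walkWeight, Walk.edges_map, List.map_map]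

lemma Iso.wdist_eq {H : SimpleGraph W} (f : G ≃g H) (w : Sym2 W → ℝ) (u v : V) :
    wdist H w (f u) (f v) = wdist G (w ∘ Sym2.map f) u v := by
  unfold wdist
  congr 1
  ext x
  constructor
  · rintro ⟨p, rfl⟩
    refine ⟨(p.map f.symm.toHom).copy (by simp) (by simp), ?_⟩
    simp [walkWeight, Walk.edges_map, List.map_map, Function.comp_def, Sym2.map_map]
  · rintro ⟨p, rfl⟩
    exact ⟨p.map f.toHom, walkWeight_map _ w p⟩

end WalkWeight

section GraphWeight

variable {V W : Type*} [Fintype V] {G : SimpleGraph V} {w : Sym2 V → ℝ}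

open scoped Classical in
lemma gweight_eq_sum_edgeSet : gweight G w = ∑ e : G.edgeSet, w e :=
  Finset.sum_subtype _ (fun _ => Set.mem_toFinset) w

lemma Iso.gweight_eq [Fintype W] {H : SimpleGraph W} (f : G ≃g H) (w : Sym2 W → ℝ) :
    gweight H w = gweight G (w ∘ Sym2.map f) := by
  classical
  rw [gweight_eq_sum_edgeSet, gweight_eq_sum_edgeSet]
  exact (Fintype.sum_equiv f.mapEdgeSet _ _ fun _ => rfl).symm

lemma IsTree.sum_sub_add_le_gweight {T : SimpleGraph V} (hT : T.IsTree) {n : ℕ}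
    (hV : Fintype.card V = n + 1) {δ : ℝ} (hw : ∀ e ∈ T.edgeSet, δ ≤ w e)
    {D : Finset (Sym2 V)} (hD : ∀ e ∈ D, e ∈ T.edgeSet) :
    ∑ e ∈ D, (w e - δ) + n * δ ≤ gweight T w := by
  classical
  have hcard : T.edgeSet.toFinset.card = n := by
    have := hT.card_edgeFinset
    rw [hV, edgeFinset] at this
    convert Nat.add_right_cancel this
  have hsplit : gweight T w = ∑ e ∈ T.edgeSet.toFinset, (w e - δ) + n * δ := by
    rw [gweight, Finset.sum_sub_distrib, Finset.sum_const, hcard, nsmul_eq_mul]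
    convert (sub_add_cancel _ _).symm
  rw [hsplit]
  gcongr
  · exact fun e he _ => sub_nonneg.2 (hw e (Set.mem_toFinset.1 he))
  · exact fun e he => Set.mem_toFinset.2 (hD e he)

end GraphWeight

section ParentGraph

variable {V : Type*}

def parentGraph (r : V) (p : V → V) : SimpleGraph V :=
  SimpleGraph.fromRel fun x y => x ≠ r ∧ y = p x

variable {r : V} {p : V → V} {h : V → ℕ}

lemma parentGraph_adj_parent (hp : ∀ x, x ≠ r → h (p x) < h x) {x : V} (hx : x ≠ r) :
    (parentGraph r p).Adj x (p x) :=
  (fromRel_adj _ _ _).2 ⟨fun hxp => (hp x hx).ne (congrArg h hxp.symm), Or.inl ⟨hx, rfl⟩⟩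

lemma parentGraph_reachable (hp : ∀ x, x ≠ r → h (p x) < h x) (x : V) :
    (parentGraph r p).Reachable r x := by
  induction hx : h x using Nat.strong_induction_on generalizing x with
  | _ n ih =>
    by_cases hxr : x = r
    · rw [hxr]
    · exact (ih _ (hx ▸ hp x hxr) _ rfl).trans (parentGraph_adj_parent hp hxr).symm.reachable

lemma parentGraph_connected (hp : ∀ x, x ≠ r → h (p x) < h x) :
    (parentGraph r p).Connected :=
  (connected_iff_exists_forall_reachable _).2 ⟨r, parentGraph_reachable hp⟩

lemma edgeSet_parentGraph (hp : ∀ x, x ≠ r → h (p x) < h x) :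
    (parentGraph r p).edgeSet = (fun x => s(x, p x)) '' {r}ᶜ := by
  ext e
  induction e using Sym2.ind with
  | _ x y =>
    simp only [mem_edgeSet, parentGraph, fromRel_adj, Set.mem_image, Set.mem_compl_singleton_iff]
    constructor
    · rintro ⟨-, ⟨hx, rfl⟩ | ⟨hy, rfl⟩⟩
      · exact ⟨x, hx, rfl⟩
      · exact ⟨y, hy, Sym2.eq_swap⟩
    · rintro ⟨z, hz, hzxy⟩
      rcases Sym2.eq_iff.1 hzxy with ⟨rfl, rfl⟩ | ⟨rfl, rfl⟩
      · exact ⟨(parentGraph_adj_parent hp hz).ne, Or.inl ⟨hz, rfl⟩⟩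
      · exact ⟨(parentGraph_adj_parent hp hz).ne.symm, Or.inr ⟨hz, rfl⟩⟩

/-- `s(x, p x) = s(y, p y)` with `x ≠ y` would force `h x < h y < h x`. -/
lemma injOn_parentEdge (hp : ∀ x, x ≠ r → h (p x) < h x) :
    Set.InjOn (fun x => s(x, p x)) {r}ᶜ := by
  intro x hx y hy hxy
  rcases Sym2.eq_iff.1 hxy with ⟨hxy, -⟩ | ⟨hxpy, hpxy⟩
  · exact hxy
  · have hlt := hp x hx
    have hgt := hp y hy
    rw [hpxy] at hlt
    rw [← hxpy] at hgt
    omega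

lemma parentGraph_isTree [Finite V] (hp : ∀ x, x ≠ r → h (p x) < h x) :
    (parentGraph r p).IsTree := by
  rw [isTree_iff_connected_and_card]
  refine ⟨parentGraph_connected hp, ?_⟩
  rw [Nat.card_coe_set_eq, edgeSet_parentGraph hp, (injOn_parentEdge hp).ncard_image,
    ← Set.ncard_singleton r, Set.ncard_compl_add_ncard]

lemma gweight_parentGraph [Fintype V] [DecidableEq V] (hp : ∀ x, x ≠ r → h (p x) < h x)
    (w : Sym2 V → ℝ) : gweight (parentGraph r p) w = ∑ x ∈ univ.erase r, w s(x, p x) := by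
  rw [gweight, ← Finset.sum_image (g := fun x => s(x, p x)) fun x hx y hy =>
    injOn_parentEdge hp (by simpa using hx) (by simpa using hy)]
  congr 1
  ext e
  simp [edgeSet_parentGraph hp]

end ParentGraph

section Planarity

variable {V : Type*}

lemma reachable_deleteEdges_of_preconnected_induce {F : SimpleGraph V} {X : Set V}
    (hX : (F.induce X).Preconnected) {e : Sym2 V} {z : V} (hz : z ∈ e) (hzX : z ∉ X)
    {x y : V} (hx : x ∈ X) (hy : y ∈ X) : (F.deleteEdges {e}).Reachable x y := by
  refine (hX ⟨x, hx⟩ ⟨y, hy⟩).map ⟨Subtype.val, fun {a b} hab => ?_⟩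
  refine deleteEdges_adj.2 ⟨hab, fun he => hzX ?_⟩
  rw [Set.mem_singleton_iff] at he
  rcases Sym2.mem_iff.1 (he ▸ hz) with rfl | rfl
  exacts [a.2, b.2]

/-- The edge `a₁b₁` between the first two branch sets would not be a bridge: `a₁` reaches `b₁`
through the third one. -/
lemma IsAcyclic.not_triangle_of_branchSets {F : SimpleGraph V} (hF : F.IsAcyclic)
    {A B C : Set V} (hA : (F.induce A).Preconnected) (hB : (F.induce B).Preconnected)
    (hC : (F.induce C).Preconnected) (hAB : Disjoint A B) (hBC : Disjoint B C)
    (hCA : Disjoint C A) (eAB : ∃ a ∈ A, ∃ b ∈ B, F.Adj a b)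
    (eBC : ∃ b ∈ B, ∃ c ∈ C, F.Adj b c) (eCA : ∃ c ∈ C, ∃ a ∈ A, F.Adj c a) : False := by
  obtain ⟨a₁, ha₁, b₁, hb₁, hab⟩ := eAB
  obtain ⟨b₂, hb₂, c₁, hc₁, hbc⟩ := eBC
  obtain ⟨c₂, hc₂, a₂, ha₂, hca⟩ := eCA
  apply isBridge_iff.1 (isAcyclic_iff_forall_adj_isBridge.1 hF hab)
  have hCA' := connected_induce_union hC hA hc₂ ha₂ hca
  have hBC' := connected_induce_union hB hC hb₂ hc₁ hbc
  have hb₁CA : b₁ ∉ C ∪ A := by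
    rintro (h | h)
    exacts [hBC.notMem_of_mem_left hb₁ h, hAB.notMem_of_mem_right hb₁ h]
  have ha₁BC : a₁ ∉ B ∪ C := by
    rintro (h | h)
    exacts [hAB.notMem_of_mem_left ha₁ h, hCA.notMem_of_mem_right ha₁ h]
  exact (reachable_deleteEdges_of_preconnected_induce hCA'.preconnected (Sym2.mem_mk_right _ _)
    hb₁CA (Or.inr ha₁) (Or.inl hc₁)).trans
    (reachable_deleteEdges_of_preconnected_induce hBC'.preconnected (Sym2.mem_mk_left _ _)
      ha₁BC (Or.inr hc₁) (Or.inl hb₁))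

variable {G : SimpleGraph V} {r : V}

lemma exists_forall_ne_notMem_of_pairwise_disjoint {ι : Type*} [Nonempty ι] {f : ι → Set V}
    (hf : Pairwise fun i j => Disjoint (f i) (f j)) (r : V) : ∃ i₀, ∀ i, i ≠ i₀ → r ∉ f i := by
  by_cases h : ∃ i₀, r ∈ f i₀
  · obtain ⟨i₀, hi₀⟩ := h
    exact ⟨i₀, fun i hi hri => (hf hi).notMem_of_mem_right hi₀ hri⟩
  · exact ⟨Classical.arbitrary ι, fun i _ hi => h ⟨i, hi⟩⟩

lemma preconnected_induce_deleteIncidenceSet {X : Set V} (hX : (G.induce X).Connected)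
    (hr : r ∉ X) : ((G.deleteIncidenceSet r).induce X).Preconnected := by
  refine hX.preconnected.mono fun x y hxy => deleteIncidenceSet_adj.2 ⟨hxy, ?_, ?_⟩
  exacts [fun h => hr (h ▸ x.2), fun h => hr (h ▸ y.2)]

lemma exists_adj_deleteIncidenceSet {X Y : Set V} (hrX : r ∉ X) (hrY : r ∉ Y)
    (h : ∃ x ∈ X, ∃ y ∈ Y, G.Adj x y) :
    ∃ x ∈ X, ∃ y ∈ Y, (G.deleteIncidenceSet r).Adj x y := by
  obtain ⟨x, hx, y, hy, hxy⟩ := h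
  exact ⟨x, hx, y, hy, deleteIncidenceSet_adj.2
    ⟨hxy, fun h => hrX (h ▸ hx), fun h => hrY (h ▸ hy)⟩⟩

lemma not_graphIsMinor_K5_of_isAcyclic_deleteIncidenceSet
    (hG : (G.deleteIncidenceSet r).IsAcyclic) :
    ¬ GraphIsMinor (⊤ : SimpleGraph (Fin 5)) G := by
  rintro ⟨f, hconn, hdisj, hadj⟩
  obtain ⟨i₀, hi₀⟩ := exists_forall_ne_notMem_of_pairwise_disjoint hdisj r
  have triangle : ∀ i₀ : Fin 5, ∃ a b c : Fin 5,
      a ≠ b ∧ b ≠ c ∧ c ≠ a ∧ a ≠ i₀ ∧ b ≠ i₀ ∧ c ≠ i₀ := by decide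
  obtain ⟨a, b, c, hab, hbc, hca, ha, hb, hc⟩ := triangle i₀
  have branch := fun i hi => preconnected_induce_deleteIncidenceSet (hconn i) (hi₀ i hi)
  have cross := fun i j hi hj hij => exists_adj_deleteIncidenceSet (hi₀ i hi) (hi₀ j hj)
    (hadj i j hij)
  exact hG.not_triangle_of_branchSets (branch a ha) (branch b hb) (branch c hc)
    (hdisj hab) (hdisj hbc) (hdisj hca) (cross a b ha hb hab) (cross b c hb hc hbc)
    (cross c a hc ha hca)

/-- The triangle is formed by the branch sets of `a₁`, `b₁` and the union of those of `a₂`, `b₂`. -/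
lemma not_graphIsMinor_K33_of_isAcyclic_deleteIncidenceSet
    (hG : (G.deleteIncidenceSet r).IsAcyclic) :
    ¬ GraphIsMinor (completeBipartiteGraph (Fin 3) (Fin 3)) G := by
  rintro ⟨f, hconn, hdisj, hadj⟩
  obtain ⟨i₀, hi₀⟩ := exists_forall_ne_notMem_of_pairwise_disjoint hdisj r
  have indices : ∀ i₀ : Fin 3 ⊕ Fin 3, ∃ a₁ a₂ b₁ b₂ : Fin 3, a₁ ≠ a₂ ∧ b₁ ≠ b₂ ∧
      .inl a₁ ≠ i₀ ∧ .inl a₂ ≠ i₀ ∧ .inr b₁ ≠ i₀ ∧ .inr b₂ ≠ i₀ := by decide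
  obtain ⟨a₁, a₂, b₁, b₂, ha, hb, ha₁, ha₂, hb₁, hb₂⟩ := indices i₀
  have cross : ∀ i j, i ≠ i₀ → j ≠ i₀ → (completeBipartiteGraph (Fin 3) (Fin 3)).Adj i j →
      ∃ x ∈ f i, ∃ y ∈ f j, (G.deleteIncidenceSet r).Adj x y :=
    fun i j hi hj hij => exists_adj_deleteIncidenceSet (hi₀ i hi) (hi₀ j hj) (hadj i j hij)
  have hC : ((G.deleteIncidenceSet r).induce (f (.inl a₂) ∪ f (.inr b₂))).Preconnected := by
    obtain ⟨x, hx, y, hy, hxy⟩ := hadj (.inl a₂) (.inr b₂) (by simp)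
    exact preconnected_induce_deleteIncidenceSet
      (connected_induce_union (hconn _).preconnected (hconn _).preconnected hx hy hxy)
      (by rintro (h | h); exacts [hi₀ _ ha₂ h, hi₀ _ hb₂ h])
  obtain ⟨x, hx, y, hy, hxy⟩ := cross (.inr b₁) (.inl a₂) hb₁ ha₂ (by simp)
  obtain ⟨x', hx', y', hy', hxy'⟩ := cross (.inr b₂) (.inl a₁) hb₂ ha₁ (by simp)
  exact hG.not_triangle_of_branchSets
    (preconnected_induce_deleteIncidenceSet (hconn _) (hi₀ _ ha₁))
    (preconnected_induce_deleteIncidenceSet (hconn _) (hi₀ _ hb₁)) hC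
    (hdisj (by simp)) (Disjoint.union_right (hdisj (by simp)) (hdisj (by simpa using hb)))
    (Disjoint.union_left (hdisj (by simpa using ha.symm)) (hdisj (by simp)))
    (cross _ _ ha₁ hb₁ (by simp)) ⟨x, hx, y, Or.inl hy, hxy⟩ ⟨x', Or.inr hx', y', hy', hxy'⟩

theorem graphIsPlanar_of_isAcyclic_deleteIncidenceSet (hG : (G.deleteIncidenceSet r).IsAcyclic) :
    GraphIsPlanar G :=
  ⟨not_graphIsMinor_K5_of_isAcyclic_deleteIncidenceSet hG,
    not_graphIsMinor_K33_of_isAcyclic_deleteIncidenceSet hG⟩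

end Planarity

end SimpleGraph

lemma GraphIsMinor.of_embedding {X V W : Type*} {K : SimpleGraph X} {G : SimpleGraph V}
    {H : SimpleGraph W} (h : GraphIsMinor K G) (f : G ↪g H) : GraphIsMinor K H := by
  obtain ⟨g, hconn, hdisj, hadj⟩ := h
  refine ⟨fun x => f '' g x, fun x => ?_, fun x y hxy => ?_, fun x y hxy => ?_⟩
  · let φ : G.induce (g x) →g H.induce (f '' g x) :=
      ⟨fun a => ⟨f a, Set.mem_image_of_mem f a.2⟩, f.map_adj_iff.2⟩
    refine (hconn x).map φ ?_
    rintro ⟨_, a, ha, rfl⟩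
    exact ⟨⟨a, ha⟩, rfl⟩
  · exact (Set.disjoint_image_iff f.injective).2 (hdisj hxy)
  · obtain ⟨a, ha, b, hb, hab⟩ := hadj x y hxy
    exact ⟨f a, Set.mem_image_of_mem f ha, f b, Set.mem_image_of_mem f hb, f.map_adj_iff.2 hab⟩

lemma GraphIsPlanar.of_embedding {V W : Type*} {G : SimpleGraph V} {H : SimpleGraph W}
    (h : GraphIsPlanar H) (f : G ↪g H) : GraphIsPlanar G :=
  ⟨fun hK => h.1 (hK.of_embedding f), fun hK => h.2 (hK.of_embedding f)⟩

/-- `G` has no `(α, β)`-LAST (light approximate shortest-path tree) rooted at `r`. -/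
def NoLAST {V : Type*} [Fintype V] (α β : ℝ) (G : SimpleGraph V) (w : Sym2 V → ℝ) (r : V) :
    Prop :=
  ∀ T : SimpleGraph V, T ≤ G → T.IsTree → (∀ v, wdist T w r v ≤ α * wdist G w r v) →
    ∀ M : SimpleGraph V, M ≤ G → M.IsTree →
      (∀ M' : SimpleGraph V, M' ≤ G → M'.IsTree → gweight M w ≤ gweight M' w) →
      β * gweight M w < gweight T w

lemma NoLAST.of_iso {V W : Type*} [Fintype V] [Fintype W] {α β : ℝ} {G : SimpleGraph V}
    {H : SimpleGraph W} {w : Sym2 V → ℝ} {r : V} (f : G ≃g H) (h : NoLAST α β G w r) :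
    NoLAST α β H (w ∘ Sym2.map f.symm) (f r) := by
  have hw : (w ∘ Sym2.map f.symm) ∘ Sym2.map f = w := by
    funext e
    simp [Sym2.map_map, Function.comp_def]
  have pull : ∀ S ≤ H, S.IsTree → S.comap f ≤ G ∧ (S.comap f).IsTree ∧
      gweight S (w ∘ Sym2.map f.symm) = gweight (S.comap f) w ∧
      ∀ v, wdist S (w ∘ Sym2.map f.symm) (f r) (f v) = wdist (S.comap f) w r v := by
    intro S hS hSt
    let φ : S.comap f ≃g S := Iso.comap f.toEquiv S
    refine ⟨fun x y hxy => f.map_adj_iff.1 (hS hxy), φ.isTree_iff.2 hSt, ?_, fun v => ?_⟩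
    · exact (φ.gweight_eq _).trans (congrArg _ hw)
    · exact (φ.wdist_eq _ r v).trans (congrArg (wdist _ · r v) hw)
  intro T hT hTt hreq M hM hMt hmin
  obtain ⟨hT', hTt', hTw, hTd⟩ := pull T hT hTt
  obtain ⟨hM', hMt', hMw, -⟩ := pull M hM hMt
  rw [hTw, hMw]
  refine h _ hT' hTt' (fun v => ?_) _ hM' hMt' fun N hN hNt => ?_
  · rw [← hTd, ← congrArg (wdist G · r v) hw, ← f.wdist_eq]
    exact hreq (f v)
  · let ψ : N.comap f.symm ≃g N := Iso.comap f.symm.toEquiv N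
    rw [← hMw, ψ.gweight_eq]
    exact hmin _ (fun x y hxy => f.symm.map_adj_iff.1 (hN hxy)) (ψ.isTree_iff.2 hNt)

namespace Spokes

/-- `inl false` is the root, `inl true` the center, and `inr (i, j)` the `j`-th vertex of the
`i`-th spoke hanging from the center; the last vertex of a spoke is its leaf. -/
abbrev Vert (k m : ℕ) := Bool ⊕ (Fin k × Fin (m + 1))

variable {k m : ℕ}

def root : Vert k m := .inl false

def center : Vert k m := .inl true

def leaf (i : Fin k) : Vert k m := .inr (i, Fin.last m)

@[simp] lemma root_ne_leaf {i : Fin k} : (root : Vert k m) ≠ leaf i := by simp [root, leaf]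

@[simp] lemma center_ne_leaf {i : Fin k} : (center : Vert k m) ≠ leaf i := by simp [center, leaf]

@[simp] lemma root_ne_center : (root : Vert k m) ≠ center := by simp [root, center]

def parent : Vert k m → Vert k m
  | .inl _ => root
  | .inr (_, ⟨0, _⟩) => center
  | .inr (i, ⟨j + 1, hj⟩) => .inr (i, ⟨j, by omega⟩)

def depth : Vert k m → ℕ
  | .inl b => b.toNat
  | .inr (_, j) => j + 2

lemma depth_parent_lt : ∀ x : Vert k m, x ≠ root → depth (parent x) < depth x
  | .inl false, h => absurd rfl h
  | .inl true, _ => by simp [parent, depth, root]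
  | .inr (_, ⟨0, _⟩), _ => by simp [parent, depth, center]
  | .inr (_, ⟨j + 1, _⟩), _ => by simp [parent, depth]

variable (k m) in
def tree : SimpleGraph (Vert k m) := parentGraph root parent

variable (k m) in
def graph : SimpleGraph (Vert k m) :=
  tree k m ⊔ fromEdgeSet (Set.range fun i => s(root, leaf i))

variable (k m) in
/-- The edges at the root are the edge to the center, of weight `A`, and the direct edges to
the leaves, of weight `2`; every spoke edge has weight `δ`. -/
def weight (A δ : ℝ) (e : Sym2 (Vert k m)) : ℝ :=
  if root ∈ e then if center ∈ e then A else 2 else δ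

lemma tree_isTree : (tree k m).IsTree := parentGraph_isTree depth_parent_lt

lemma tree_le_graph : tree k m ≤ graph k m := le_sup_left

lemma graph_connected : (graph k m).Connected :=
  (parentGraph_connected depth_parent_lt).mono tree_le_graph

lemma graph_adj {x y : Vert k m} :
    (graph k m).Adj x y ↔ (tree k m).Adj x y ∨ ∃ i, s(x, y) = s(root, leaf i) := by
  simp only [graph, sup_adj, fromEdgeSet_adj, Set.mem_range]
  refine or_congr_right ⟨fun ⟨⟨i, hi⟩, _⟩ => ⟨i, hi.symm⟩, fun ⟨i, hi⟩ => ⟨⟨i, hi.symm⟩, ?_⟩⟩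
  rintro rfl
  rcases Sym2.eq_iff.1 hi with ⟨h₁, h₂⟩ | ⟨h₁, h₂⟩
  exacts [root_ne_leaf (h₁.symm.trans h₂), root_ne_leaf (h₂.symm.trans h₁)]

lemma deleteIncidenceSet_graph_le_tree : (graph k m).deleteIncidenceSet root ≤ tree k m := by
  intro x y h
  obtain ⟨hxy, hx, hy⟩ := deleteIncidenceSet_adj.1 h
  refine (graph_adj.1 hxy).resolve_right ?_
  rintro ⟨i, hi⟩
  rcases Sym2.eq_iff.1 hi with ⟨rfl, -⟩ | ⟨-, rfl⟩
  exacts [hx rfl, hy rfl]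

lemma graph_planar : GraphIsPlanar (graph k m) :=
  graphIsPlanar_of_isAcyclic_deleteIncidenceSet
    (tree_isTree.isAcyclic.anti deleteIncidenceSet_graph_le_tree)

variable {A δ : ℝ}

lemma weight_nonneg (hA : 0 ≤ A) (hδ : 0 ≤ δ) (e : Sym2 (Vert k m)) : 0 ≤ weight k m A δ e := by
  unfold weight
  split_ifs <;> linarith

lemma le_weight (hδA : δ ≤ A) (hδ : δ ≤ 2) (e : Sym2 (Vert k m)) : δ ≤ weight k m A δ e := by
  unfold weight
  split_ifs <;> linarith

@[simp] lemma weight_root_leaf (i : Fin k) : weight k m A δ s(root, leaf i) = 2 := by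
  simp [weight, root_ne_center.symm]

@[simp] lemma weight_inr_parent (p : Fin k × Fin (m + 1)) :
    weight k m A δ s(.inr p, parent (.inr p)) = δ := by
  obtain ⟨i, ⟨_ | j, hj⟩⟩ := p <;> simp [weight, parent, root, center]

lemma gweight_tree : gweight (tree k m) (weight k m A δ) = A + k * ((m + 1) * δ) := by
  rw [tree, gweight_parentGraph depth_parent_lt, Finset.sum_erase_eq_sub (mem_univ _),
    Fintype.sum_sum_type, Fintype.sum_bool]
  simp only [weight_inr_parent, sum_const, card_univ, Fintype.card_prod, Fintype.card_fin]
  simp [weight, root, center, parent]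
  ring

lemma wdist_graph_root_leaf_le (hA : 0 ≤ A) (hδ : 0 ≤ δ) (i : Fin k) :
    wdist (graph k m) (weight k m A δ) root (leaf i) ≤ 2 := by
  have hadj : (graph k m).Adj root (leaf i) := graph_adj.2 (Or.inr ⟨i, rfl⟩)
  simpa using wdist_le_walkWeight (weight_nonneg hA hδ) (Walk.cons hadj Walk.nil)

def spokePotential (A δ : ℝ) (onSpoke : Prop) [Decidable onSpoke] (t : ℕ) : ℝ :=
  if onSpoke then A + t * δ else max (A - t * δ) 2

lemma spokePotential_zero (hA : 2 ≤ A) (b : Prop) [Decidable b] :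
    spokePotential A δ b 0 = A := by
  simp [spokePotential, hA]

lemma abs_spokePotential_succ_sub (hδ : 0 ≤ δ) (b : Prop) [Decidable b] (t : ℕ) :
    |spokePotential A δ b (t + 1) - spokePotential A δ b t| ≤ δ := by
  unfold spokePotential
  split_ifs
  · rw [abs_of_nonneg] <;> push_cast <;> linarith
  · refine (abs_max_sub_max_le_abs _ _ _).trans ?_
    rw [abs_le]
    push_cast
    constructor <;> linarith

variable (A δ) in
/-- A lower bound for the distance from the root once the direct edge to `leaf i₀` is removed:
spoke `i₀` can only be entered through the center, every other spoke also from its leaf. -/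
def potential (i₀ : Fin k) : Vert k m → ℝ
  | .inl b => if b then A else 0
  | .inr (i, j) => spokePotential A δ (i = i₀) (j + 1)

lemma abs_potential_sub_parent_le (hA : 2 ≤ A) (hδ : 0 ≤ δ) (i₀ : Fin k) :
    ∀ x : Vert k m, x ≠ root →
      |potential A δ i₀ x - potential A δ i₀ (parent x)| ≤ weight k m A δ s(x, parent x)
  | .inl false, h => absurd rfl h
  | .inl true, _ => by
    simp [potential, parent, root, center, weight, abs_of_nonneg (by linarith : (0 : ℝ) ≤ A)]
  | .inr (i, ⟨0, _⟩), _ => by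
    have h := abs_spokePotential_succ_sub (A := A) hδ (i = i₀) 0
    rw [spokePotential_zero hA] at h
    rw [weight_inr_parent]
    simpa [potential, parent, center] using h
  | .inr (i, ⟨j + 1, _⟩), _ => by
    rw [weight_inr_parent]
    simpa [potential, parent] using abs_spokePotential_succ_sub (A := A) hδ (i = i₀) (j + 1)

lemma abs_potential_sub_le_weight (hA : 2 ≤ A) (hδ : 0 ≤ δ) (hS : A ≤ 2 + (m + 1) * δ)
    {i₀ : Fin k} {x y : Vert k m} (hxy : (graph k m).Adj x y) (hne : s(x, y) ≠ s(root, leaf i₀)) :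
    |potential A δ i₀ y - potential A δ i₀ x| ≤ weight k m A δ s(x, y) := by
  rcases graph_adj.1 hxy with htree | ⟨i, hi⟩
  · rcases ((fromRel_adj _ _ _).1 htree).2 with ⟨hx, rfl⟩ | ⟨hy, rfl⟩
    · rw [abs_sub_comm]
      exact abs_potential_sub_parent_le hA hδ i₀ x hx
    · rw [Sym2.eq_swap]
      exact abs_potential_sub_parent_le hA hδ i₀ y hy
  · have hi₀ : i ≠ i₀ := by rintro rfl; exact hne hi
    have hleaf : potential A δ i₀ (leaf i : Vert k m) = 2 := by
      simpa [potential, leaf, spokePotential, hi₀] using hS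
    have hroot : potential A δ i₀ (root : Vert k m) = 0 := rfl
    rw [hi, weight_root_leaf]
    rcases Sym2.eq_iff.1 hi with ⟨rfl, rfl⟩ | ⟨rfl, rfl⟩ <;> norm_num [hleaf, hroot]

lemma adj_root_leaf_of_wdist_le {α : ℝ} (hα : 0 ≤ α) (hA : 2 ≤ A) (hδ : 0 ≤ δ)
    (hS : A ≤ 2 + (m + 1) * δ) (hαS : 2 * α < A + (m + 1) * δ) {T : SimpleGraph (Vert k m)}
    (hT : T ≤ graph k m) (hTc : T.Connected) (i₀ : Fin k)
    (hreq : wdist T (weight k m A δ) root (leaf i₀) ≤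
      α * wdist (graph k m) (weight k m A δ) root (leaf i₀)) :
    T.Adj root (leaf i₀) := by
  by_contra hmiss
  have hpot : ∀ x y, T.Adj x y →
      potential A δ i₀ y - potential A δ i₀ x ≤ weight k m A δ s(x, y) := fun x y hxy =>
    (le_abs_self _).trans <| abs_potential_sub_le_weight hA hδ hS (hT hxy) fun he =>
      hmiss (T.mem_edgeSet.1 (he ▸ T.mem_edgeSet.2 hxy))
  have hT_ge : A + (m + 1) * δ ≤ wdist T (weight k m A δ) root (leaf i₀) := by
    simpa [potential, root, leaf, spokePotential] using
      sub_le_wdist_of_potential hpot (hTc.preconnected root (leaf i₀))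
  have hG_le := wdist_graph_root_leaf_le (m := m) (A := A) (by linarith) hδ i₀
  nlinarith

lemma leaf_injective : Function.Injective (leaf : Fin k → Vert k m) :=
  fun i j h => by simpa [leaf] using h

lemma le_gweight_of_wdist_le {α : ℝ} (hα : 0 ≤ α) (hA : 2 ≤ A) (hδ : 0 ≤ δ) (hδ2 : δ ≤ 2)
    (hS : A ≤ 2 + (m + 1) * δ) (hαS : 2 * α < A + (m + 1) * δ) {T : SimpleGraph (Vert k m)}
    (hT : T ≤ graph k m) (hTt : T.IsTree)
    (hreq : ∀ v, wdist T (weight k m A δ) root v ≤ α * wdist (graph k m) (weight k m A δ) root v) :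
    2 * k + (k * m + 1) * δ ≤ gweight T (weight k m A δ) := by
  have hD : ∀ e ∈ univ.image fun i => s(root, leaf i), e ∈ T.edgeSet := by
    simp only [mem_image, mem_univ, true_and, forall_exists_index, forall_apply_eq_imp_iff]
    exact fun i => adj_root_leaf_of_wdist_le hα hA hδ hS hαS hT hTt.connected i (hreq _)
  have hV : Fintype.card (Vert k m) = (k * (m + 1) + 1) + 1 := by simp; ring
  have h := hTt.sum_sub_add_le_gweight hV (fun e _ => le_weight (A := A) (by linarith) hδ2 e) hD
  rw [sum_image fun i _ j _ h => leaf_injective (Sym2.congr_right.1 h)] at h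
  simp only [weight_root_leaf, sum_const, card_univ, Fintype.card_fin, nsmul_eq_mul] at h
  push_cast at h
  linarith

theorem noLAST_graph {α β : ℝ} (hα : 1 ≤ α) (hβ : 0 ≤ β) (hδ : 0 ≤ δ) (hδ2 : δ ≤ 2)
    (hαS : α - 1 < (m + 1) * δ)
    (hgap : β * (α + 1 + k * ((m + 1) * δ)) < 2 * k + (k * m + 1) * δ) :
    NoLAST α β (graph k m) (weight k m (α + 1) δ) root := by
  intro T hT hTt hreq M _ _ hmin
  calc β * gweight M (weight k m (α + 1) δ)
      ≤ β * gweight (tree k m) (weight k m (α + 1) δ) :=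
        mul_le_mul_of_nonneg_left (hmin _ tree_le_graph tree_isTree) hβ
    _ < 2 * k + (k * m + 1) * δ := by rwa [gweight_tree]
    _ ≤ gweight T (weight k m (α + 1) δ) :=
        le_gweight_of_wdist_le (by linarith) (by linarith) hδ hδ2 (by linarith) (by linarith)
          hT hTt hreq

end Spokes

/-- With `g = α + 1 - β (α - 1) > 0` and `δ = g / (2β)`, each spoke costs `T` at least `β δ`
more than `β` times its share of the minimum spanning tree, and `k > (α + 1) / δ` spokes pay for
`β` times the edge `rc`. -/
lemma exists_spokes_parameters {α β : ℝ} (hα : 1 < α) (hβ1 : 1 ≤ β)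
    (hβ2 : β < 1 + 2 / (α - 1)) :
    ∃ (k m : ℕ) (δ : ℝ), 0 < δ ∧ δ ≤ 2 ∧ α - 1 < (m + 1) * δ ∧
      β * (α + 1 + k * ((m + 1) * δ)) < 2 * k + (k * m + 1) * δ := by
  set g := α + 1 - β * (α - 1)
  have hg : 0 < g := by
    have := (lt_div_iff₀ (by linarith : (0 : ℝ) < α - 1)).1 (sub_lt_iff_lt_add'.2 hβ2)
    nlinarith
  set δ := g / (2 * β) with hδ_def
  have hδ : 0 < δ := by positivity
  have hβδ : β * δ = g / 2 := by rw [hδ_def]; field_simp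
  set m := ⌊(α - 1) / δ⌋₊
  set k := ⌊(α + 1) / δ⌋₊ + 1
  have hm_lt : α - 1 < (m + 1) * δ := (div_lt_iff₀ hδ).1 (Nat.lt_floor_add_one _)
  have hm_le : m * δ ≤ α - 1 := (le_div_iff₀ hδ).1 (Nat.floor_le (by positivity))
  have hk : α + 1 < k * δ := by
    have := (div_lt_iff₀ hδ).1 (Nat.lt_floor_add_one ((α + 1) / δ))
    push_cast [k]
    linarith
  refine ⟨k, m, δ, hδ, by nlinarith, hm_lt, ?_⟩
  have hspoke : β * δ ≤ 2 + m * δ - β * ((m + 1) * δ) := by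
    nlinarith [mul_le_mul_of_nonneg_left hm_le (by linarith : (0 : ℝ) ≤ β - 1)]
  nlinarith [mul_le_mul_of_nonneg_left hspoke (Nat.cast_nonneg k : (0 : ℝ) ≤ k),
    mul_lt_mul_of_pos_left hk (by linarith : (0 : ℝ) < β)]

theorem no_LAST_below_tradeoff_general (α β : ℝ) (hα : 1 < α) (hβ1 : 1 ≤ β)
    (hβ2 : β < 1 + 2 / (α - 1)) :
    ∃ (n : ℕ) (G : SimpleGraph (Fin n)) (w : Sym2 (Fin n) → ℝ) (r : Fin n),
      (∀ e, 0 ≤ w e) ∧ G.Connected ∧ GraphIsPlanar G ∧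
      ∀ T : SimpleGraph (Fin n), T ≤ G → T.IsTree →
        (∀ v, wdist T w r v ≤ α * wdist G w r v) →
        ∀ M : SimpleGraph (Fin n), M ≤ G → M.IsTree →
          (∀ M' : SimpleGraph (Fin n), M' ≤ G → M'.IsTree → gweight M w ≤ gweight M' w) →
          β * gweight M w < gweight T w := by
  obtain ⟨k, m, δ, hδ, hδ2, hS, hgap⟩ := exists_spokes_parameters hα hβ1 hβ2
  let f := Iso.map (Fintype.equivFin (Spokes.Vert k m)) (Spokes.graph k m)
  exact ⟨_, _, _, f Spokes.root,
    fun _ => Spokes.weight_nonneg (by linarith) hδ.le _,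
    f.connected_iff.1 Spokes.graph_connected,
    Spokes.graph_planar.of_embedding f.symm.toEmbedding,
    (Spokes.noLAST_graph hα.le (by linarith) hδ.le hδ2 hS hgap).of_iso f⟩

/-- For every `α > 1`, every `β` with `1 ≤ β < 1 + 2/(α-1)`, and every
`ε > 0`, there is a (planar, connected, nonnegatively weighted) graph `G` with a root `r`
in which every spanning tree satisfying the `α`-distance requirement has weight strictly
greater than `β` times the minimum spanning tree weight. -/
theorem no_LAST_below_tradeoff (α β ε : ℝ) (hα : 1 < α) (hβ1 : 1 ≤ β)
    (hβ2 : β < 1 + 2 / (α - 1)) (hε : 0 < ε) :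
    ∃ (n : ℕ) (G : SimpleGraph (Fin n)) (w : Sym2 (Fin n) → ℝ) (r : Fin n),
      (∀ e, 0 ≤ w e) ∧ G.Connected ∧ GraphIsPlanar G ∧
      ∀ T : SimpleGraph (Fin n), T ≤ G → T.IsTree →
        (∀ v, wdist T w r v ≤ α * wdist G w r v) →
        ∀ M : SimpleGraph (Fin n), M ≤ G → M.IsTree →
          (∀ M' : SimpleGraph (Fin n), M' ≤ G → M'.IsTree → gweight M w ≤ gweight M' w) →
          β * gweight M w < gweight T w :=
  no_LAST_below_tradeoff_general α β hα hβ1 hβ2
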